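/- Collision detection matrix is full rank: let n > b and let j_1, ..., j_{2^{n-b}} enumerate a coset {j : H j = k} where H = Psi_b^T Sigma^T, Sigma invertible, and let sigma_1,...,sigma_{n-b} be the first n-b columns of Sigma. Then the real (n-b+1) x 2^{n-b} matrix whose first row is all ones and whose (d+1)-st row has entries (-1)^{<sigma_d, j_m>} has rank n-b+1. -/

import Mathlib

/-!
Through the first `n - b` coordinates of `Σᵀ j` (`Σ` is `A`), the coset is in bijection with `𝔽₂^(n-b)`,
and in these coordinates the rows of the matrix are the characters `x ↦ (-1)^⟨u, x⟩` of
`𝔽₂^(n-b)` for the distinct frequencies `u = 0, e₁, …, e_(n-b)`. Distinct characters are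
orthogonal, so `M Mᵀ = 2^(n-b) • 1` and `rank M = rank (M Mᵀ) = n - b + 1`.
-/

open Matrix Finset

/-- Inner product over `𝔽₂`. -/
def ip {ι : Type*} [Fintype ι] (u v : ι → ZMod 2) : ZMod 2 := ∑ t, u t * v t

/-- `(-1)^b` for `b ∈ 𝔽₂`. -/
def sgn (a : ZMod 2) : ℝ := (-1 : ℝ) ^ a.val

/-- The Walsh-Hadamard transform. -/
noncomputable def WHT {ι : Type*} [DecidableEq ι] [Fintype ι]
    (x : (ι → ZMod 2) → ℝ) (k : ι → ZMod 2) : ℝ :=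
  (Real.sqrt (Fintype.card (ι → ZMod 2)))⁻¹ * ∑ m, sgn (ip k m) * x m

/-- `Ψ_b : 𝔽₂ᵇ → 𝔽₂ⁿ`, placing a `b`-bit vector in the last `b` coordinates. -/
def Psi (n b : ℕ) (hb : b ≤ n) (m : Fin b → ZMod 2) : Fin n → ZMod 2 :=
  fun i => if _ : (i : ℕ) < n - b then 0 else m ⟨(i : ℕ) - (n - b), by have := i.isLt; omega⟩

/-- `Ψ_bᵀ : 𝔽₂ⁿ → 𝔽₂ᵇ`, extracting the last `b` coordinates. -/
def PsiT (n b : ℕ) (hb : b ≤ n) (j : Fin n → ZMod 2) : Fin b → ZMod 2 :=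
  fun t => j ⟨n - b + (t : ℕ), by have := t.isLt; omega⟩

lemma sgn_add (a c : ZMod 2) : sgn (a + c) = sgn a * sgn c := by
  rw [sgn, sgn, sgn, ZMod.val_add, ← pow_add, ← neg_one_pow_eq_pow_mod_two]

lemma sgn_sum {α : Type*} (s : Finset α) (g : α → ZMod 2) :
    sgn (∑ i ∈ s, g i) = ∏ i ∈ s, sgn (g i) := by
  classical
  induction s using Finset.induction_on with
  | empty => simp [sgn]
  | insert a s ha ih => rw [sum_insert ha, prod_insert ha, sgn_add, ih]

lemma sum_sgn_mul_mul_sgn_mul (c c' : ZMod 2) :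
    ∑ a : ZMod 2, sgn (c * a) * sgn (c' * a) = if c = c' then 2 else 0 := by
  have hcases : ∀ a : ZMod 2, a = 0 ∨ a = 1 := by decide
  have hsum : ∀ g : ZMod 2 → ℝ, ∑ a, g a = g 0 + g 1 := Fin.sum_univ_two
  rcases hcases c with rfl | rfl <;> rcases hcases c' with rfl | rfl <;>
    norm_num [hsum, sgn, ZMod.val_one]

-- The sum factors over the coordinates of `x`.
lemma sum_sgn_ip_mul_sgn_ip {ι : Type*} [Fintype ι] [DecidableEq ι] (v w : ι → ZMod 2) :
    ∑ x : ι → ZMod 2, sgn (ip v x) * sgn (ip w x)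
      = if v = w then 2 ^ Fintype.card ι else 0 := by
  simp only [ip, sgn_sum, ← prod_mul_distrib]
  rw [← Fintype.prod_sum (fun t a => sgn (v t * a) * sgn (w t * a))]
  simp only [sum_sgn_mul_mul_sgn_mul, prod_ite_zero, funext_iff, prod_const, card_univ,
    mem_univ, forall_const]

theorem rank_sgn_ip_eq_card {ι ρ κ : Type*} [Fintype ι] [DecidableEq ι] [Fintype ρ] [Fintype κ]
    (u : ρ → ι → ZMod 2) (hu : Function.Injective u) (f : κ → ι → ZMod 2)
    (hf : Function.Bijective f) :
    (Matrix.of fun i m => sgn (ip (u i) (f m))).rank = Fintype.card ρ := by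
  classical
  set M : Matrix ρ κ ℝ := Matrix.of fun i m => sgn (ip (u i) (f m))
  have hMMt : M * Mᵀ = (2 ^ Fintype.card ι : ℝ) • 1 := by
    ext i i'
    have := (hf.sum_comp fun x => sgn (ip (u i) x) * sgn (ip (u i') x)).trans
      (sum_sgn_ip_mul_sgn_ip _ _)
    simpa [M, mul_apply, one_apply, hu.eq_iff] using this
  rw [← rank_self_mul_transpose, hMMt, rank_smul_of_mem_nonZeroDivisors _
    (mem_nonZeroDivisors_of_ne_zero (by positivity)), rank_one]

lemma ip_single_one_left {ι : Type*} [Fintype ι] [DecidableEq ι] (d : ι) (x : ι → ZMod 2) :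
    ip (Pi.single d 1) x = x d := by
  simp [ip, Pi.single_apply]

lemma ip_col_eq_transpose_mulVec {n : Type*} [Fintype n] (A : Matrix n n (ZMod 2)) (j : n)
    (x : n → ZMod 2) : ip (fun t => A t j) x = (Aᵀ *ᵥ x) j := by
  simp [ip, mulVec, dotProduct]

lemma eq_of_castLE_eq_of_PsiT_eq {n b : ℕ} (hb : b ≤ n) {x y : Fin n → ZMod 2}
    (hlow : ∀ d : Fin (n - b), x (Fin.castLE (n.sub_le b) d) = y (Fin.castLE (n.sub_le b) d))
    (hhigh : PsiT n b hb x = PsiT n b hb y) : x = y := by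
  funext i
  by_cases hi : (i : ℕ) < n - b
  · exact hlow ⟨i, hi⟩
  · have := congrFun hhigh ⟨i - (n - b), by omega⟩
    simpa [PsiT, show n - b + (i - (n - b)) = i by omega] using this

lemma bijective_low_coords_of_PsiT_eq {n b : ℕ} (hb : b ≤ n) {κ : Type*} [Fintype κ]
    (hκ : Fintype.card κ = 2 ^ (n - b)) {A : Matrix (Fin n) (Fin n) (ZMod 2)}
    (hA : IsUnit A.det) (k : Fin b → ZMod 2) (e : κ → Fin n → ZMod 2)
    (he : Function.Injective e) (hek : ∀ m, PsiT n b hb (Aᵀ *ᵥ e m) = k) :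
    Function.Bijective fun m (d : Fin (n - b)) => (Aᵀ *ᵥ e m) (Fin.castLE (n.sub_le b) d) := by
  have hAT : Function.Injective Aᵀ.mulVec :=
    mulVec_injective_iff_isUnit.2 ((isUnit_transpose _).2 ((isUnit_iff_isUnit_det A).2 hA))
  refine (Fintype.bijective_iff_injective_and_card _).2 ⟨fun m m' hmm' => ?_, by simp [hκ]⟩
  exact he (hAT (eq_of_castLE_eq_of_PsiT_eq hb (congrFun hmm') ((hek m).trans (hek m').symm)))

/-- The collision-detection matrix (all-ones first row, then rows of signs
`(-1)^⟨σ_d, j_m⟩` over an enumeration of the coset `{j : H j = k}`) is full rank. -/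
theorem stmt11 (n b : ℕ) (hb : b < n)
    (A : Matrix (Fin n) (Fin n) (ZMod 2)) (hA : IsUnit A.det) (k : Fin b → ZMod 2)
    (e : Fin (2 ^ (n - b)) → (Fin n → ZMod 2)) (he : Function.Injective e)
    (hek : ∀ m, PsiT n b hb.le (Aᵀ.mulVec (e m)) = k) :
    (Matrix.of fun (i : Fin (n - b + 1)) (m : Fin (2 ^ (n - b))) =>
      if _ : (i : ℕ) = 0 then (1 : ℝ)
      else sgn (ip (fun t => A t ⟨(i : ℕ) - 1, by have := i.isLt; omega⟩) (e m))).rank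
      = n - b + 1 := by
  set B := Pi.basisFun (ZMod 2) (Fin (n - b))
  set u : Fin (n - b + 1) → Fin (n - b) → ZMod 2 := Fin.cons 0 B
  have hu : Function.Injective u :=
    Fin.cons_injective_iff.2 ⟨fun ⟨d, hd⟩ => B.ne_zero d hd, B.injective⟩
  have hf := bijective_low_coords_of_PsiT_eq hb.le (Fintype.card_fin _) hA k e he hek
  convert (rank_sgn_ip_eq_card u hu _ hf).trans (Fintype.card_fin _) using 2
  ext i m
  induction i using Fin.cases with
  | zero => simp [u, ip, sgn]
  | succ d => simp [u, B, ip_single_one_left, ip_col_eq_transpose_mulVec]; rfl
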